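/- Let C be a rotationally asymmetric configuration of finitely many distinct points on a circle with true leader L. Any other expected leader r of C (i.e., any point r ≠ L that is a cognizant or undecided leader) satisfies α(L, r) ≥ π, where α(L,r) is the clockwise angular distance from L to r. -/

import Mathlib

open Real
open scoped Classical

noncomputable section

/-- Clockwise angular distance from `p` to `q`, a real number in `[0, 2π)`. -/
def cw (p q : Real.Angle) : ℝ :=
  if 0 ≤ (q - p).toReal then (q - p).toReal else (q - p).toReal + 2 * π

/-- The sorted list of clockwise distances from `p` to the points of `S`. -/
def dists (S : Finset Real.Angle) (p : Real.Angle) : List ℝ :=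
  (S.image (cw p)).sort (· ≤ ·)

/-- The clockwise angular-gap sequence of `p` with respect to the configuration `S`:
the sequence of clockwise gaps between consecutive points, starting from `p`. -/
def gapSeq (S : Finset Real.Angle) (p : Real.Angle) : List ℝ :=
  List.zipWith (fun a b => a - b) ((dists S p).tail ++ [2 * π]) (dists S p)

/-- Lexicographic strict order on lists of reals. -/
def lexLt (a b : List ℝ) : Prop := List.Lex (· < ·) a b

/-- `L` is the true leader of `S`: its angular-gap sequence is lexicographically
strictly smallest. -/
def TrueLeader (S : Finset Real.Angle) (L : Real.Angle) : Prop :=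
  L ∈ S ∧ ∀ r ∈ S, r ≠ L → lexLt (gapSeq S L) (gapSeq S r)

/-- `S` is rotationally asymmetric: no nontrivial rotation about the center fixes `S`. -/
def RotAsym (S : Finset Real.Angle) : Prop :=
  ∀ θ : Real.Angle, θ ≠ 0 → S.image (· + θ) ≠ S

/-- The antipodal position of a point on the circle. -/
def antipode (p : Real.Angle) : Real.Angle := p + (π : Real.Angle)

/-- The hypothetical configuration in which the antipode of `r` is unoccupied. -/
def C0 (S : Finset Real.Angle) (r : Real.Angle) : Finset Real.Angle := S.erase (antipode r)

/-- The hypothetical configuration in which the antipode of `r` is occupied. -/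
def C1 (S : Finset Real.Angle) (r : Real.Angle) : Finset Real.Angle := insert (antipode r) S

/-- `r` is an undecided leader: both hypothetical configurations are rotationally
asymmetric and `r` is the true leader of exactly one of them. -/
def Undecided (S : Finset Real.Angle) (r : Real.Angle) : Prop :=
  r ∈ S ∧ RotAsym (C0 S r) ∧ RotAsym (C1 S r) ∧
    Xor' (TrueLeader (C0 S r) r) (TrueLeader (C1 S r) r)

/-- `r` is a cognizant leader: `r` is the true leader in every consistent
(hypothetical) configuration. -/
def Cognizant (S : Finset Real.Angle) (r : Real.Angle) : Prop :=
  r ∈ S ∧ (RotAsym (C0 S r) → TrueLeader (C0 S r) r) ∧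
    (RotAsym (C1 S r) → TrueLeader (C1 S r) r)

/-- An expected leader is a cognizant leader or an undecided leader. -/
def ExpectedLeader (S : Finset Real.Angle) (r : Real.Angle) : Prop :=
  Cognizant S r ∨ Undecided S r

/-!
Comparing gap sequences lexicographically amounts to comparing the sets of clockwise distances:
`a` precedes `b` when the smallest distance at which exactly one of them sees a point is one at
which `a` does. In this form, adding a point `p` can only hand the lead from `a` to a point on the
clockwise arc from `a` to `p`.

An expected leader `r ≠ L` must be the true leader of the hypothetical configuration that differs
from `S` at `antipode r`. If `antipode r ∈ S`, then `r` leads `S \ {antipode r}` and adding the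
antipode back hands the lead to `L`, so `L` lies in the half circle clockwise from `r`. If
`antipode r ∉ S`, then `r` leads `S ∪ {antipode r}`, so `r` lies on the arc from `L` to
`antipode r`, hence `cw L r < π`, and `r` and `L` see the same points up to some distance
`W > cw L r`. The point `q` at distance `cw L r` clockwise of `r` then precedes `r` just as `r`
precedes `L`, a contradiction.
-/

theorem List.lex_zipWith_sub_iff {α : Type*} [AddCommGroup α] [LinearOrder α]
    [IsOrderedAddMonoid α] (T : α) {d e : List α} (hlen : d.length = e.length) (c : α) :
    List.Lex (· < ·) (List.zipWith (fun a b => a - b) (d ++ [T]) (c :: d))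
        (List.zipWith (fun a b => a - b) (e ++ [T]) (c :: e)) ↔ List.Lex (· < ·) d e := by
  induction d generalizing c e with
  | nil =>
    obtain rfl := List.length_eq_zero_iff.mp hlen.symm
    simp [List.not_lex_nil]
  | cons x d ih =>
    obtain _ | ⟨y, e⟩ := e
    · simp at hlen
    simp only [List.cons_append, List.zipWith_cons_cons, List.cons_lex_cons_iff,
      sub_lt_sub_iff_right, sub_left_inj]
    refine or_congr_right (and_congr_right fun hxy => ?_)
    subst hxy
    exact ih (by simpa using hlen) x

theorem List.lex_lt_iff_of_pairwise {α : Type*} [LinearOrder α] :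
    ∀ {l₁ l₂ : List α}, l₁.Pairwise (· < ·) → l₂.Pairwise (· < ·) → l₁.length = l₂.length →
      (List.Lex (· < ·) l₁ l₂ ↔ ∃ w ∈ l₁, w ∉ l₂ ∧ ∀ v < w, (v ∈ l₁ ↔ v ∈ l₂))
  | [], [], _, _, _ => by simp [List.not_lex_nil]
  | [], _ :: _, _, _, hlen | _ :: _, [], _, _, hlen => by simp at hlen
  | x :: l₁, y :: l₂, h₁, h₂, hlen => by
    have below {a v : α} {l : List α} (hl : ∀ b ∈ l, a < b) (hv : v < a) : v ∉ a :: l :=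
      fun h => (List.mem_cons.mp h).elim hv.ne fun h => lt_asymm hv (hl v h)
    rw [List.pairwise_cons] at h₁ h₂
    rw [List.cons_lex_cons_iff]
    rcases lt_trichotomy x y with hxy | rfl | hxy
    · refine iff_of_true (Or.inl hxy) ⟨x, List.mem_cons_self, below h₂.1 hxy, fun v hv => ?_⟩
      exact iff_of_false (below h₁.1 hv) (below h₂.1 (hv.trans hxy))
    · simp only [lt_irrefl, false_or, true_and]
      rw [List.lex_lt_iff_of_pairwise h₁.2 h₂.2 (by simpa using hlen)]
      constructor
      · rintro ⟨w, hw₁, hw₂, hagree⟩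
        refine ⟨w, List.mem_cons_of_mem x hw₁, ?_, fun v hv => ?_⟩
        · exact fun h => (List.mem_cons.mp h).elim (h₁.1 w hw₁).ne' hw₂
        · simp only [List.mem_cons, hagree v hv]
      · rintro ⟨w, hw₁, hw₂, hagree⟩
        have hwx : w ≠ x := fun h => hw₂ (h ▸ List.mem_cons_self)
        refine ⟨w, (List.mem_cons.mp hw₁).resolve_left hwx, fun h => hw₂ (.tail x h),
          fun v hv => ?_⟩
        by_cases hvx : v = x
        · subst hvx
          exact iff_of_false (fun h => lt_irrefl v (h₁.1 v h)) (fun h => lt_irrefl v (h₂.1 v h))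
        · simpa [hvx] using hagree v hv
    · refine iff_of_false ?_ ?_
      · rintro (h | ⟨rfl, -⟩)
        · exact lt_asymm h hxy
        · exact lt_irrefl x hxy
      · rintro ⟨w, hw, -, hagree⟩
        have hxw : x ≤ w := by
          rcases List.mem_cons.mp hw with rfl | hw
          exacts [le_rfl, (h₁.1 w hw).le]
        exact below h₁.1 hxy ((hagree y (hxy.trans_le hxw)).mpr List.mem_cons_self)

lemma cw_nonneg (p q : Angle) : 0 ≤ cw p q := by
  unfold cw
  split_ifs with h
  · exact h
  · linarith [Angle.neg_pi_lt_toReal (q - p)]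

lemma cw_lt_two_pi (p q : Angle) : cw p q < 2 * π := by
  unfold cw
  split_ifs with h
  · linarith [Angle.toReal_le_pi (q - p), pi_pos]
  · linarith

lemma coe_cw (p q : Angle) : (cw p q : Angle) = q - p := by
  unfold cw
  split_ifs
  · exact Angle.coe_toReal _
  · rw [Angle.coe_add, Angle.coe_two_pi, add_zero, Angle.coe_toReal]

lemma cw_eq_of_coe_eq {p q : Angle} {t : ℝ} (h0 : 0 ≤ t) (h2 : t < 2 * π)
    (h : (t : Angle) = q - p) : cw p q = t :=
  have : Fact (0 < 2 * π) := ⟨two_pi_pos⟩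
  (AddCircle.coe_eq_coe_iff_of_mem_Ico (p := 2 * π) (a := 0)
    ⟨cw_nonneg p q, by simpa using cw_lt_two_pi p q⟩ ⟨h0, by simpa using h2⟩).mp
    ((coe_cw p q).trans h.symm)

lemma cw_injective (x : Angle) : Function.Injective (cw x) := fun y z h =>
  sub_left_inj.mp ((coe_cw x y).symm.trans (h ▸ coe_cw x z))

lemma cw_self (p : Angle) : cw p p = 0 :=
  cw_eq_of_coe_eq le_rfl two_pi_pos (by simp)

lemma cw_pos {p q : Angle} (h : p ≠ q) : 0 < cw p q :=
  (cw_nonneg p q).lt_of_ne fun h' => h (cw_injective p (h'.symm.trans (cw_self p).symm)).symm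

lemma cw_eq_two_pi_sub_cw {p q : Angle} (h : p ≠ q) : cw q p = 2 * π - cw p q :=
  cw_eq_of_coe_eq (by linarith [cw_lt_two_pi p q]) (by linarith [cw_pos h])
    (by rw [Angle.coe_sub, Angle.coe_two_pi, coe_cw]; abel)

lemma cw_add_cw {x y z : Angle} (h : cw x y + cw y z < 2 * π) :
    cw x z = cw x y + cw y z :=
  cw_eq_of_coe_eq (add_nonneg (cw_nonneg x y) (cw_nonneg y z)) h
    (by rw [Angle.coe_add, coe_cw, coe_cw]; abel)

lemma cw_antipode (r : Angle) : cw r (antipode r) = π :=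
  cw_eq_of_coe_eq pi_pos.le (by linarith [pi_pos]) (by simp [antipode])

lemma mem_image_cw_iff_add {U : Finset Angle} {x r : Angle} {v : ℝ} (hv : 0 ≤ v)
    (hv' : cw x r + v < 2 * π) : v ∈ U.image (cw r) ↔ cw x r + v ∈ U.image (cw x) := by
  simp only [Finset.mem_image]
  refine exists_congr fun y => and_congr_right fun _ => ⟨fun h => ?_, fun h => ?_⟩
  · rw [← h, cw_add_cw (h ▸ hv')]
  · refine cw_eq_of_coe_eq hv (by linarith [cw_nonneg x r]) ?_
    rw [show v = cw x y - cw x r by linarith, Angle.coe_sub, coe_cw, coe_cw]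
    abel

def PrecedesAt (U : Finset Angle) (a b : Angle) (w : ℝ) : Prop :=
  w ∈ U.image (cw a) ∧ w ∉ U.image (cw b) ∧
    ∀ v < w, (v ∈ U.image (cw a) ↔ v ∈ U.image (cw b))

def Precedes (U : Finset Angle) (a b : Angle) : Prop :=
  ∃ w, PrecedesAt U a b w

lemma Precedes.ne {U : Finset Angle} {a b : Angle} (h : Precedes U a b) : a ≠ b := by
  rintro rfl
  obtain ⟨w, hw, hw', -⟩ := h
  exact hw' hw

lemma Precedes.asymm {U : Finset Angle} {a b : Angle} (h : Precedes U a b) :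
    ¬ Precedes U b a := by
  rintro ⟨w', hw'b, hw'a, hagree'⟩
  obtain ⟨w, hwa, hwb, hagree⟩ := h
  rcases lt_trichotomy w w' with hlt | rfl | hlt
  · exact hwb ((hagree' w hlt).mpr hwa)
  · exact hw'a hwa
  · exact hw'a ((hagree w' hlt).mpr hw'b)

lemma precedesAt_insert_iff {T : Finset Angle} {p a b : Angle} {w : ℝ}
    (ha : w < cw a p) (hb : w < cw b p) :
    PrecedesAt (insert p T) a b w ↔ PrecedesAt T a b w := by
  have hne {v} (hv : v ≤ w) : v ≠ cw a p ∧ v ≠ cw b p :=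
    ⟨(hv.trans_lt ha).ne, (hv.trans_lt hb).ne⟩
  unfold PrecedesAt
  simp only [Finset.image_insert, Finset.mem_insert, (hne le_rfl).1, (hne le_rfl).2, false_or]
  refine and_congr_right fun _ => and_congr_right fun _ => forall₂_congr fun v hv => ?_
  simp only [(hne hv.le).1, (hne hv.le).2, false_or]

lemma PrecedesAt.shift {U : Finset Angle} {x x' y y' : Angle} {w : ℝ}
    (h : PrecedesAt U x x' w) (hy : cw x y = cw x' y') (hw : cw x y ≤ w) :
    PrecedesAt U y y' (w - cw x y) := by
  obtain ⟨hwx, hwx', hagree⟩ := h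
  have hw2 : w < 2 * π := by
    obtain ⟨z, -, rfl⟩ := Finset.mem_image.mp hwx
    exact cw_lt_two_pi x z
  have shift {z z' : Angle} (hz : cw z z' = cw x y) {v : ℝ} (hv : 0 ≤ v) (hvw : v ≤ w - cw x y) :
      v ∈ U.image (cw z') ↔ cw x y + v ∈ U.image (cw z) :=
    hz ▸ mem_image_cw_iff_add hv (by linarith)
  have hsub : cw x y + (w - cw x y) = w := by ring
  refine ⟨?_, ?_, fun v hv => ?_⟩
  · rwa [shift rfl (by linarith) le_rfl, hsub]
  · rwa [shift hy.symm (by linarith) le_rfl, hsub]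
  · rcases lt_or_ge v 0 with hv0 | hv0
    · have hout {z : Angle} : v ∉ U.image (cw z) := fun h => by
        obtain ⟨t, -, rfl⟩ := Finset.mem_image.mp h
        exact hv0.not_ge (cw_nonneg z t)
      exact iff_of_false hout hout
    · rw [shift rfl hv0 hv.le, shift hy.symm hv0 hv.le]
      exact hagree _ (by linarith)

lemma pairwise_lt_dists (U : Finset Angle) (x : Angle) :
    (dists U x).Pairwise (· < ·) :=
  (Finset.sortedLT_sort _).pairwise

lemma length_dists (U : Finset Angle) (x : Angle) : (dists U x).length = U.card := by
  rw [dists, Finset.length_sort, Finset.card_image_of_injective _ (cw_injective x)]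

lemma exists_dists_eq_zero_cons {U : Finset Angle} {x : Angle} (hx : x ∈ U) :
    ∃ t, dists U x = 0 :: t := by
  have h0 : (0 : ℝ) ∈ dists U x := by
    rw [dists, Finset.mem_sort]
    exact Finset.mem_image.mpr ⟨x, hx, cw_self x⟩
  have hsorted := pairwise_lt_dists U x
  rcases hd : dists U x with _ | ⟨a, t⟩
  · simp [hd] at h0
  · have ha : 0 ≤ a := by
      have : a ∈ dists U x := hd ▸ List.mem_cons_self
      rw [dists, Finset.mem_sort] at this
      obtain ⟨y, -, rfl⟩ := Finset.mem_image.mp this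
      exact cw_nonneg x y
    rw [hd, List.pairwise_cons] at hsorted
    rw [hd] at h0
    rcases List.mem_cons.mp h0 with rfl | h0
    · exact ⟨t, rfl⟩
    · exact absurd (hsorted.1 0 h0) ha.not_gt

lemma lexLt_gapSeq_iff {U : Finset Angle} {a b : Angle} (ha : a ∈ U) (hb : b ∈ U) :
    lexLt (gapSeq U a) (gapSeq U b) ↔ Precedes U a b := by
  obtain ⟨s, hs⟩ := exists_dists_eq_zero_cons ha
  obtain ⟨t, ht⟩ := exists_dists_eq_zero_cons hb
  have hlen : (dists U a).length = (dists U b).length := by rw [length_dists, length_dists]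
  unfold lexLt gapSeq
  rw [hs, ht, List.tail_cons, List.tail_cons,
    List.lex_zipWith_sub_iff _ (by simpa [hs, ht] using hlen), ← List.lex_cons_iff (a := 0), ← hs,
    ← ht, List.lex_lt_iff_of_pairwise (pairwise_lt_dists U a) (pairwise_lt_dists U b) hlen]
  simp only [dists, Finset.mem_sort]
  rfl

lemma TrueLeader.precedes {U : Finset Angle} {L r : Angle} (hL : TrueLeader U L)
    (hr : r ∈ U) (hrL : r ≠ L) : Precedes U L r :=
  (lexLt_gapSeq_iff hL.1 hr).mp (hL.2 r hr hrL)

lemma TrueLeader.unique {U : Finset Angle} {L r : Angle} (hL : TrueLeader U L)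
    (hr : TrueLeader U r) : r = L := by
  by_contra hrL
  exact (hL.precedes hr.1 hrL).asymm (hr.precedes hL.1 (Ne.symm hrL))

lemma cw_le_cw_of_precedes_insert {T : Finset Angle} {p a b : Angle} (hp : p ∉ T)
    (h : Precedes T a b) (h' : Precedes (insert p T) b a) : cw a b ≤ cw a p := by
  by_contra! hlt
  have hab := h.ne
  have hbp : cw a p < cw b p := by
    have hsum : cw b a + cw a p < 2 * π := by rw [cw_eq_two_pi_sub_cw hab]; linarith
    rw [cw_add_cw hsum]
    linarith [cw_pos hab.symm]
  have hpa : cw a p ∉ T.image (cw a) := fun h =>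
    hp (by obtain ⟨y, hy, hyp⟩ := Finset.mem_image.mp h; rwa [← cw_injective a hyp])
  refine h'.asymm ?_
  obtain ⟨w, hw⟩ := h
  rcases lt_or_ge w (cw a p) with hw_lt | hw_ge
  · exact ⟨w, (precedesAt_insert_iff hw_lt (hw_lt.trans hbp)).mpr hw⟩
  · have hagree := hw.2.2
    have hw_gt : cw a p < w := hw_ge.lt_of_ne fun h => hpa (h ▸ hw.1)
    refine ⟨cw a p, ?_, ?_, fun v hv => ?_⟩
    · simp [Finset.image_insert]
    · simp only [Finset.image_insert, Finset.mem_insert, hbp.ne, false_or]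
      exact fun h => hpa ((hagree _ hw_gt).mpr h)
    · simp only [Finset.image_insert, Finset.mem_insert, hv.ne, (hv.trans hbp).ne, false_or]
      exact hagree v (hv.trans hw_gt)

lemma pi_le_cw_of_trueLeader_erase_antipode {S : Finset Angle} {L r : Angle}
    (hp : antipode r ∈ S) (hL : TrueLeader S L) (hr : TrueLeader (S.erase (antipode r)) r)
    (hrL : r ≠ L) : π ≤ cw L r := by
  by_cases hLp : L = antipode r
  · have hpr : antipode r ≠ r := fun h => pi_ne_zero (by rw [← cw_antipode r, h, cw_self])
    rw [hLp, cw_eq_two_pi_sub_cw hpr.symm, cw_antipode]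
    linarith
  · have hrL' := hr.precedes (Finset.mem_erase.mpr ⟨hLp, hL.1⟩) hrL.symm
    have hLr : Precedes (insert (antipode r) (S.erase (antipode r))) L r := by
      rw [Finset.insert_erase hp]
      exact hL.precedes (Finset.mem_of_mem_erase hr.1) hrL
    have h := cw_le_cw_of_precedes_insert (Finset.notMem_erase _ _) hrL' hLr
    rw [cw_antipode] at h
    rw [cw_eq_two_pi_sub_cw hrL]
    linarith

lemma not_trueLeader_insert_antipode {S : Finset Angle} {L r : Angle}
    (hp : antipode r ∉ S) (hL : TrueLeader S L) (hr : r ∈ S) (hrL : r ≠ L) :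
    ¬ TrueLeader (insert (antipode r) S) r := by
  intro hC
  obtain ⟨W, hW⟩ := hC.precedes (Finset.mem_insert_of_mem hL.1) hrL.symm
  have hLr := hL.precedes hr hrL
  have hrp := cw_le_cw_of_precedes_insert hp hLr ⟨W, hW⟩
  have hr_lt_pi : cw L r < π := by
    by_contra! h
    have : cw L (antipode r) = cw L r - π := by
      refine cw_eq_of_coe_eq (by linarith) (by linarith [cw_lt_two_pi L r]) ?_
      rw [Angle.coe_sub, coe_cw, antipode, sub_eq_add_neg (r - L), Angle.neg_coe_pi]
      abel
    linarith [pi_pos]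
  have hLp : cw L (antipode r) = cw L r + π := by
    rw [cw_add_cw (y := r) (by rw [cw_antipode]; linarith), cw_antipode]
  have hrW : cw L r < W := by
    by_contra! h
    refine hLr.asymm ⟨W, (precedesAt_insert_iff ?_ ?_).mp hW⟩
    · rw [cw_antipode]; linarith
    · rw [hLp]; linarith [pi_pos]
  obtain ⟨q, hqC, hq⟩ := Finset.mem_image.mp
    ((hW.2.2 _ hrW).mpr (Finset.mem_image_of_mem _ (Finset.mem_insert_of_mem hr)))
  have hqr : Precedes (insert (antipode r) S) q r := ⟨_, hW.shift hq (hq ▸ hrW.le)⟩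
  exact hqr.asymm (hC.precedes hqC hqr.ne)

theorem stmt9 (S : Finset Real.Angle) (hasym : RotAsym S)
    (L : Real.Angle) (hL : TrueLeader S L)
    (r : Real.Angle) (hr : r ∈ S) (hrL : r ≠ L) (hE : ExpectedLeader S r) :
    Real.pi ≤ cw L r := by
  have hrS : ¬ TrueLeader S r := fun h => hrL (hL.unique h)
  by_cases hp : antipode r ∈ S
  · have hC1 : C1 S r = S := Finset.insert_eq_self.mpr hp
    refine pi_le_cw_of_trueLeader_erase_antipode hp hL ?_ hrL
    rcases hE with ⟨-, -, h1⟩ | ⟨-, -, -, ⟨h0, -⟩ | ⟨h1, -⟩⟩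
    · rw [hC1] at h1
      exact absurd (h1 hasym) hrS
    · exact h0
    · rw [hC1] at h1
      exact absurd h1 hrS
  · have hC0 : C0 S r = S := Finset.erase_eq_of_notMem hp
    refine absurd ?_ (not_trueLeader_insert_antipode hp hL hr hrL)
    rcases hE with ⟨-, h0, -⟩ | ⟨-, -, -, ⟨h0, -⟩ | ⟨h1, -⟩⟩
    · rw [hC0] at h0
      exact absurd (h0 hasym) hrS
    · rw [hC0] at h0
      exact absurd h0 hrS
    · exact h1
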